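/- Let G=(V,w,m) be a connected, locally finite weighted graph satisfying Deg_max < ∞, q_min > 0, and κ(x,y) ≥ 0 for all x ≠ y ∈ V. Then G has the Liouville property: every bounded harmonic function f : V → ℝ is constant. -/

import Mathlib

open scoped BigOperators

/-- A weighted graph `G = (V, w, m)`: a symmetric edge-weight function `w`
vanishing on the diagonal, a positive vertex measure `m`, and local finiteness. -/
structure WeightedGraph (V : Type*) where
  w : V → V → ℝ
  m : V → ℝ
  w_symm : ∀ x y, w x y = w y x
  w_nonneg : ∀ x y, 0 ≤ w x y
  w_diag : ∀ x, w x x = 0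
  m_pos : ∀ x, 0 < m x
  locFin : ∀ x, {y | 0 < w x y}.Finite

namespace WeightedGraph

variable {V : Type*} (G : WeightedGraph V)

/-- Adjacency: `x ~ y` iff `w x y > 0`. -/
def Adj (x y : V) : Prop := 0 < G.w x y

/-- The underlying simple graph. -/
def toSimpleGraph : SimpleGraph V where
  Adj x y := 0 < G.w x y
  symm := ⟨by intro x y h; rw [G.w_symm y x]; exact h⟩
  loopless := ⟨by intro x h; rw [G.w_diag] at h; exact lt_irrefl 0 h⟩

/-- Combinatorial graph distance. -/
noncomputable def d (x y : V) : ℕ := G.toSimpleGraph.dist x y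

/-- Transition rate `q(x,y) = w(x,y)/m(x)`. -/
noncomputable def q (x y : V) : ℝ := G.w x y / G.m x

/-- The graph Laplacian `Δf(x) = Σ_y q(x,y) (f(y) - f(x))`. -/
noncomputable def lap (f : V → ℝ) (x : V) : ℝ := ∑ᶠ y, G.q x y * (f y - f x)

/-- The weighted vertex degree `Deg(x) = Σ_y q(x,y)`. -/
noncomputable def Deg (x : V) : ℝ := ∑ᶠ y, G.q x y

/-- The maximal weighted vertex degree. -/
noncomputable def DegMax : ℝ := ⨆ x, G.Deg x

/-- The minimal transition rate over edges, `q_min = inf_{x ~ y} q(x,y)`. -/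
noncomputable def qMin : ℝ := sInf {r : ℝ | ∃ x y, G.Adj x y ∧ r = G.q x y}

/-- `‖∇f‖_∞ = sup_{x ~ y} (f x - f y)/d(x,y)`. -/
noncomputable def gradNorm (f : V → ℝ) : ℝ :=
  sSup {r : ℝ | ∃ x y, G.Adj x y ∧ r = (f x - f y) / (G.d x y : ℝ)}

/-- The Ollivier curvature
`κ(x,y) = inf { ∇_{xy} Δf : ∇_{yx} f = 1, ‖∇f‖_∞ = 1 }`. -/
noncomputable def kappa (x y : V) : ℝ :=
  sInf {r : ℝ | ∃ f : V → ℝ,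
    (f y - f x) / (G.d y x : ℝ) = 1 ∧ G.gradNorm f = 1 ∧
    r = (G.lap f x - G.lap f y) / (G.d x y : ℝ)}

/-- A function is harmonic if `Δf = 0`. -/
def Harmonic (f : V → ℝ) : Prop := ∀ x, G.lap f x = 0

/-- A transport plan between `x₀ ≠ y₀`: a nonnegative function supported on
`B₁(x₀) × B₁(y₀)` whose marginals on the spheres `S₁(x₀)`, `S₁(y₀)` are
`q(x₀,·)` and `q(y₀,·)` respectively. -/
def IsTransportPlan (x₀ y₀ : V) (ρ : V → V → ℝ) : Prop :=
  (∀ x y, 0 ≤ ρ x y) ∧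
  (∀ x y, ρ x y ≠ 0 → G.d x₀ x ≤ 1 ∧ G.d y₀ y ≤ 1) ∧
  (∀ x, G.d x₀ x = 1 → ∑ᶠ y, ρ x y = G.q x₀ x) ∧
  (∀ y, G.d y₀ y = 1 → ∑ᶠ x, ρ x y = G.q y₀ y)

/-- The transport functional `Σ_{x,y} ρ(x,y) (1 - d(x,y)/d(x₀,y₀))`. -/
noncomputable def transportCost (x₀ y₀ : V) (ρ : V → V → ℝ) : ℝ :=
  ∑ᶠ x, ∑ᶠ y, ρ x y * (1 - (G.d x y : ℝ) / (G.d x₀ y₀ : ℝ))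

/-- An optimal transport plan attains the supremum of the transport functional. -/
def IsOptimalTransportPlan (x₀ y₀ : V) (ρ : V → V → ℝ) : Prop :=
  G.IsTransportPlan x₀ y₀ ρ ∧
  ∀ ρ' : V → V → ℝ, G.IsTransportPlan x₀ y₀ ρ' →
    G.transportCost x₀ y₀ ρ' ≤ G.transportCost x₀ y₀ ρ

end WeightedGraph

/-!
Normalise a nonconstant bounded harmonic `f` so that its largest difference along an edge is `1`,
and call `1 - max_{y ~ x} (g x - g y)` the slack of `g` at `x`. Let `x ~ y` carry a drop of
`1 - δ` with `δ < β := q_min / (4 Deg_max)`. Harmonicity at `x` forces mass at least `q_min / 2`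
on the neighbours `z` of `x` with `g z ≥ g x + β`. Raising `g` by its slack at `x` and at these
neighbours keeps it `1`-Lipschitz and makes the drop on `xy` exactly `1`, so `κ(y, x) ≥ 0`
compares the Laplacians of the perturbation at `x` and `y`; this bounds the weighted average of
the slacks of these neighbours by `δ / β`. Hence some `z` has `g z ≥ g x + β` and slack at most
`δ / β`. Starting from slack below `β ^ (k + 1)`, this climbs `k` steps of height `β`, so `g`
is unbounded.
-/

lemma exists_add_nat_mul_le_of_step {α : Type*} {s g : α → ℝ} {β : ℝ} (hβ0 : 0 < β)
    (hβ1 : β ≤ 1) (hstep : ∀ x, s x < β → ∃ z, g x + β ≤ g z ∧ s z ≤ s x / β) :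
    ∀ (k : ℕ) (x : α), s x < β ^ (k + 1) → ∃ x', g x + k * β ≤ g x' := by
  intro k
  induction k with
  | zero => exact fun x _ => ⟨x, by simp⟩
  | succ k ih =>
    intro x hx
    have hxβ : s x < β := hx.trans_le (pow_le_of_le_one hβ0.le hβ1 (by omega))
    obtain ⟨z, hz, hsz⟩ := hstep x hxβ
    have hzk : s z < β ^ (k + 1) :=
      hsz.trans_lt ((div_lt_iff₀ hβ0).2 (by rwa [← pow_succ]))
    obtain ⟨x', hx'⟩ := ih z hzk
    exact ⟨x', by push_cast; linarith⟩

namespace WeightedGraph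

variable {V : Type*} (G : WeightedGraph V)

def OneLipschitz (f : V → ℝ) : Prop := ∀ ⦃x y⦄, G.Adj x y → f x - f y ≤ 1

noncomputable def nbr (x : V) : Finset V := (G.locFin x).toFinset

def edgeDiffs (f : V → ℝ) : Set ℝ := {r | ∃ x y, G.Adj x y ∧ r = f x - f y}

/-- An isolated vertex has slack `1`, as `sSup ∅ = 0`. -/
noncomputable def slack (g : V → ℝ) (x : V) : ℝ :=
  1 - sSup ((fun y => g x - g y) '' {y | G.Adj x y})

variable {G}

lemma Adj.symm {x y : V} (h : G.Adj x y) : G.Adj y x :=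
  SimpleGraph.Adj.symm (G := G.toSimpleGraph) h

lemma Adj.ne {x y : V} (h : G.Adj x y) : x ≠ y := G.toSimpleGraph.ne_of_adj h

lemma finite_adj (x : V) : {y | G.Adj x y}.Finite := G.locFin x

lemma mem_nbr {x y : V} : y ∈ G.nbr x ↔ G.Adj x y := Set.Finite.mem_toFinset _

lemma d_eq_one {x y : V} (h : G.Adj x y) : G.d x y = 1 := SimpleGraph.dist_eq_one_iff_adj.2 h

lemma q_nonneg (x y : V) : 0 ≤ G.q x y := div_nonneg (G.w_nonneg x y) (G.m_pos x).le

lemma q_pos {x y : V} (h : G.Adj x y) : 0 < G.q x y := div_pos h (G.m_pos x)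

lemma support_q_subset (x : V) : Function.support (G.q x) ⊆ G.nbr x := by
  intro y hy
  rw [Finset.mem_coe, mem_nbr]
  by_contra h
  exact hy (by rw [q, le_antisymm (not_lt.1 h) (G.w_nonneg x y), zero_div])

lemma qMin_le_q {x y : V} (h : G.Adj x y) : G.qMin ≤ G.q x y :=
  csInf_le ⟨0, by rintro _ ⟨a, b, -, rfl⟩; exact G.q_nonneg a b⟩ ⟨x, y, h, rfl⟩

lemma Deg_eq_sum (x : V) : G.Deg x = ∑ y ∈ G.nbr x, G.q x y :=
  finsum_eq_sum_of_support_subset _ (G.support_q_subset x)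

lemma q_le_Deg {x y : V} (h : G.Adj x y) : G.q x y ≤ G.Deg x := by
  rw [Deg_eq_sum]
  exact Finset.single_le_sum (fun z _ => G.q_nonneg x z) (mem_nbr.2 h)

lemma lap_eq_sum (f : V → ℝ) (x : V) :
    G.lap f x = ∑ y ∈ G.nbr x, G.q x y * (f y - f x) :=
  finsum_eq_sum_of_support_subset _
    ((Function.support_mul_subset_left _ _).trans (G.support_q_subset x))

lemma lap_eq_sum_sub_Deg_mul (f : V → ℝ) (x : V) :
    G.lap f x = ∑ y ∈ G.nbr x, G.q x y * f y - G.Deg x * f x := by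
  simp only [lap_eq_sum, Deg_eq_sum, Finset.sum_mul, ← Finset.sum_sub_distrib, mul_sub]

lemma lap_add (f h : V → ℝ) (x : V) : G.lap (f + h) x = G.lap f x + G.lap h x := by
  simp only [lap_eq_sum, Pi.add_apply, ← Finset.sum_add_distrib]
  exact Finset.sum_congr rfl fun y _ => by ring

lemma lap_smul (c : ℝ) (f : V → ℝ) (x : V) : G.lap (c • f) x = c * G.lap f x := by
  simp only [lap_eq_sum, Pi.smul_apply, smul_eq_mul, Finset.mul_sum]
  exact Finset.sum_congr rfl fun y _ => by ring

lemma Harmonic.smul {f : V → ℝ} (hf : G.Harmonic f) (c : ℝ) : G.Harmonic (c • f) := fun x => by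
  rw [lap_smul, hf x, mul_zero]

lemma abs_lap_le_Deg {φ : V → ℝ} (hφ : G.OneLipschitz φ) (x : V) : |G.lap φ x| ≤ G.Deg x := by
  rw [lap_eq_sum, Deg_eq_sum]
  refine (Finset.abs_sum_le_sum_abs _ _).trans (Finset.sum_le_sum fun y hy => ?_)
  have hxy := mem_nbr.1 hy
  rw [abs_mul, abs_of_nonneg (G.q_nonneg x y)]
  exact mul_le_of_le_one_right (G.q_nonneg x y) (abs_sub_le_iff.2 ⟨hφ hxy.symm, hφ hxy⟩)

lemma exists_adj_ne_of_ne (hconn : G.toSimpleGraph.Connected) {α : Type*} {f : V → α}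
    {x y : V} (h : f x ≠ f y) : ∃ a b, G.Adj a b ∧ f a ≠ f b := by
  by_contra! hc
  obtain ⟨p⟩ := hconn.preconnected x y
  induction p with
  | nil => exact h rfl
  | cons hab _ ih => exact ih (hc _ _ hab ▸ h)

section gradNorm

lemma gradNorm_eq_sSup_edgeDiffs (f : V → ℝ) : G.gradNorm f = sSup (G.edgeDiffs f) := by
  unfold gradNorm edgeDiffs
  congr 1
  ext r
  refine exists₂_congr fun x y => and_congr_right fun h => ?_
  rw [d_eq_one h, Nat.cast_one, div_one]

variable {f : V → ℝ}

lemma bddAbove_edgeDiffs {C : ℝ} (hC : ∀ x, |f x| ≤ C) : BddAbove (G.edgeDiffs f) :=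
  ⟨2 * C, by rintro _ ⟨x, y, -, rfl⟩; linarith [abs_le.1 (hC x), abs_le.1 (hC y)]⟩

lemma sub_le_gradNorm (hf : BddAbove (G.edgeDiffs f)) {x y : V} (h : G.Adj x y) :
    f x - f y ≤ G.gradNorm f := by
  rw [gradNorm_eq_sSup_edgeDiffs]
  exact le_csSup hf ⟨x, y, h, rfl⟩

lemma gradNorm_pos (hf : BddAbove (G.edgeDiffs f)) {x y : V} (h : G.Adj x y)
    (hne : f x ≠ f y) : 0 < G.gradNorm f := by
  rcases hne.lt_or_gt with hlt | hlt
  · linarith [sub_le_gradNorm hf h.symm]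
  · linarith [sub_le_gradNorm hf h]

lemma oneLipschitz_of_gradNorm_eq_one (h : G.gradNorm f = 1) : G.OneLipschitz f := by
  have hf : BddAbove (G.edgeDiffs f) := by
    by_contra hn
    rw [gradNorm_eq_sSup_edgeDiffs, Real.sSup_of_not_bddAbove hn] at h
    exact zero_ne_one h
  intro x y hxy
  exact h ▸ sub_le_gradNorm hf hxy

lemma gradNorm_eq_one (hf : G.OneLipschitz f) {x y : V} (hxy : G.Adj x y) (h : f x - f y = 1) :
    G.gradNorm f = 1 := by
  rw [gradNorm_eq_sSup_edgeDiffs]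
  refine IsGreatest.csSup_eq ⟨⟨x, y, hxy, h.symm⟩, ?_⟩
  rintro _ ⟨u, v, huv, rfl⟩
  exact hf huv

lemma oneLipschitz_inv_gradNorm_smul (hf : BddAbove (G.edgeDiffs f)) (hL : 0 < G.gradNorm f) :
    G.OneLipschitz ((G.gradNorm f)⁻¹ • f) := by
  intro x y hxy
  simp only [Pi.smul_apply, smul_eq_mul, ← mul_sub]
  exact (inv_mul_le_one₀ hL).2 (sub_le_gradNorm hf hxy)

end gradNorm

lemma lap_le_lap_of_kappa_nonneg {x y : V} (hxy : G.Adj x y) (hκ : 0 ≤ G.kappa x y)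
    {φ : V → ℝ} (hφ : G.OneLipschitz φ) (h : φ y - φ x = 1) : G.lap φ y ≤ G.lap φ x := by
  unfold kappa at hκ
  simp only [d_eq_one hxy, d_eq_one hxy.symm, Nat.cast_one, div_one] at hκ
  refine sub_nonneg.1 (hκ.trans (csInf_le ⟨-(G.Deg x + G.Deg y), ?_⟩
    ⟨φ, h, gradNorm_eq_one hφ hxy.symm h, rfl⟩))
  rintro _ ⟨f, -, hf, rfl⟩
  have hfx := abs_le.1 (abs_lap_le_Deg (oneLipschitz_of_gradNorm_eq_one hf) x)
  have hfy := abs_le.1 (abs_lap_le_Deg (oneLipschitz_of_gradNorm_eq_one hf) y)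
  linarith [hfx.1, hfy.2]

section slack

variable {g : V → ℝ}

lemma sub_le_one_sub_slack {x y : V} (h : G.Adj x y) : g x - g y ≤ 1 - G.slack g x := by
  rw [slack, sub_sub_cancel]
  exact le_csSup ((finite_adj x).image _).bddAbove ⟨y, h, rfl⟩

lemma slack_nonneg (hg : G.OneLipschitz g) (x : V) : 0 ≤ G.slack g x := by
  rw [slack, sub_nonneg]
  exact Real.sSup_le (by rintro _ ⟨y, hxy, rfl⟩; exact hg hxy) zero_le_one

lemma exists_sub_eq_one_sub_slack {x : V} (h : G.slack g x < 1) :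
    ∃ y, G.Adj x y ∧ g x - g y = 1 - G.slack g x := by
  have hne : ((fun y => g x - g y) '' {y | G.Adj x y}).Nonempty := by
    by_contra he
    rw [Set.not_nonempty_iff_eq_empty] at he
    rw [slack, he, Real.sSup_empty] at h
    linarith
  obtain ⟨y, hxy, hy⟩ := hne.csSup_mem ((finite_adj x).image _)
  exact ⟨y, hxy, by rw [slack, sub_sub_cancel, ← hy]⟩

lemma oneLipschitz_add_of_le_slack {e : V → ℝ} (he0 : 0 ≤ e) (he : e ≤ G.slack g) :
    G.OneLipschitz (g + e) := by
  intro x y hxy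
  have hgxy : g x - g y ≤ 1 - G.slack g x := sub_le_one_sub_slack hxy
  have hex : e x ≤ G.slack g x := he x
  have hey : 0 ≤ e y := he0 y
  simp only [Pi.add_apply]
  linarith

end slack

lemma exists_slack_inv_gradNorm_smul_lt {f : V → ℝ} (hL : 0 < G.gradNorm f) {ε : ℝ}
    (hε : 0 < ε) : ∃ x, G.slack ((G.gradNorm f)⁻¹ • f) x < ε := by
  have hne : (G.edgeDiffs f).Nonempty := by
    by_contra he
    rw [Set.not_nonempty_iff_eq_empty] at he
    rw [gradNorm_eq_sSup_edgeDiffs, he, Real.sSup_empty] at hL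
    exact lt_irrefl 0 hL
  have hlt : G.gradNorm f * (1 - ε) < sSup (G.edgeDiffs f) := by
    rw [← gradNorm_eq_sSup_edgeDiffs]
    nlinarith
  obtain ⟨_, ⟨x, y, hxy, rfl⟩, hxy'⟩ := exists_lt_of_lt_csSup hne hlt
  have hdrop : 1 - ε < ((G.gradNorm f)⁻¹ • f) x - ((G.gradNorm f)⁻¹ • f) y := by
    simp only [Pi.smul_apply, smul_eq_mul, ← mul_sub]
    exact (lt_inv_mul_iff₀ hL).2 hxy'
  exact ⟨x, by linarith [sub_le_one_sub_slack (g := (G.gradNorm f)⁻¹ • f) hxy]⟩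

section step

variable {g : V → ℝ}

lemma q_mul_sub_sub_le_sum_q {x y : V} (hg : G.lap g x = 0) (hgl : G.OneLipschitz g)
    (hxy : G.Adj x y) {β : ℝ} (hβ : 0 ≤ β) (hy : g y - g x < β) :
    G.q x y * (g x - g y) - G.Deg x * β ≤
      ∑ z ∈ (G.nbr x).filter (fun z => β ≤ g z - g x), G.q x z := by
  classical
  set U := (G.nbr x).filter fun z => β ≤ g z - g x
  set W := (G.nbr x).filter fun z => ¬ β ≤ g z - g x
  have hsplit : ∑ z ∈ U, G.q x z * (g z - g x) + ∑ z ∈ W, G.q x z * (g z - g x) = 0 := by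
    rw [Finset.sum_filter_add_sum_filter_not, ← lap_eq_sum, hg]
  have hsteep : ∑ z ∈ U, G.q x z * (g z - g x) ≤ ∑ z ∈ U, G.q x z :=
    Finset.sum_le_sum fun z hz =>
      mul_le_of_le_one_right (G.q_nonneg x z) (hgl (mem_nbr.1 (Finset.mem_filter.1 hz).1).symm)
  have hflat : ∑ z ∈ W, G.q x z * (g z - g x) ≤ G.q x y * (g y - g x) + G.Deg x * β := by
    have hyW : y ∈ W := Finset.mem_filter.2 ⟨mem_nbr.2 hxy, not_le.2 hy⟩
    rw [← Finset.add_sum_erase _ _ hyW]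
    gcongr
    calc _ ≤ ∑ z ∈ W.erase y, G.q x z * β :=
          Finset.sum_le_sum fun z hz => mul_le_mul_of_nonneg_left
            (not_le.1 (Finset.mem_filter.1 (Finset.mem_of_mem_erase hz)).2).le (G.q_nonneg x z)
      _ ≤ ∑ z ∈ G.nbr x, G.q x z * β :=
          Finset.sum_le_sum_of_subset_of_nonneg
            ((Finset.erase_subset _ _).trans (Finset.filter_subset _ _))
            fun z _ _ => mul_nonneg (G.q_nonneg x z) hβ
      _ = G.Deg x * β := by rw [Deg_eq_sum, Finset.sum_mul]
  linarith

lemma sum_q_mul_slack_le {x y : V} (hκ : 0 ≤ G.kappa y x) (hg : G.Harmonic g)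
    (hgl : G.OneLipschitz g) (hxy : G.Adj x y) (hy : g x - g y = 1 - G.slack g x)
    {U : Finset V} (hUx : U ⊆ G.nbr x) (hUy : ∀ z ∈ U, 1 < g z - g y) :
    ∑ z ∈ U, G.q x z * G.slack g z ≤ (G.Deg x + G.Deg y) * G.slack g x := by
  classical
  set δ := G.slack g x
  set e := Set.indicator (↑(insert x U) : Set V) (G.slack g) with he
  have he0 : 0 ≤ e := Set.indicator_nonneg fun v _ => slack_nonneg hgl v
  have hex : e x = δ := Set.indicator_of_mem (by simp) _
  have hyU : y ∉ U := fun h => by linarith [hUy y h]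
  have hey : e y = 0 := Set.indicator_of_notMem (by simp [hxy.ne.symm, hyU]) _
  have hlap : G.lap e x ≤ G.lap e y := by
    have hφ := oneLipschitz_add_of_le_slack he0
      (Set.indicator_le_self' fun v _ => slack_nonneg hgl v)
    have := lap_le_lap_of_kappa_nonneg hxy.symm hκ hφ (by simp only [Pi.add_apply]; linarith)
    rwa [lap_add, lap_add, hg x, hg y, zero_add, zero_add] at this
  have hlow : ∑ z ∈ U, G.q x z * G.slack g z - G.Deg x * δ ≤ G.lap e x := by
    rw [lap_eq_sum_sub_Deg_mul, hex]
    gcongr ?_ - _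
    calc ∑ z ∈ U, G.q x z * G.slack g z = ∑ z ∈ U, G.q x z * e z :=
          Finset.sum_congr rfl fun z hz => by rw [he, Set.indicator_of_mem (by simp [hz])]
      _ ≤ ∑ z ∈ G.nbr x, G.q x z * e z :=
          Finset.sum_le_sum_of_subset_of_nonneg hUx
            fun z _ _ => mul_nonneg (G.q_nonneg x z) (he0 z)
  have hup : G.lap e y ≤ G.Deg y * δ := by
    rw [lap_eq_sum_sub_Deg_mul, hey, mul_zero, sub_zero, Deg_eq_sum, Finset.sum_mul]
    refine Finset.sum_le_sum fun z hz => mul_le_mul_of_nonneg_left ?_ (G.q_nonneg y z)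
    by_cases hzx : z = x
    · rw [hzx, hex]
    · have hzU : z ∉ U := fun h => by linarith [hUy z h, hgl (mem_nbr.1 hz).symm]
      rw [he, Set.indicator_of_notMem (by simp [hzx, hzU])]
      exact slack_nonneg hgl x
  linarith

lemma exists_add_le_and_slack_le {D q₀ : ℝ} (hD : ∀ v, G.Deg v ≤ D)
    (hq : ∀ ⦃a b⦄, G.Adj a b → q₀ ≤ G.q a b) (hq₀ : 0 < q₀) (hq₀D : q₀ ≤ D)
    (hκ : ∀ x y : V, x ≠ y → 0 ≤ G.kappa x y) (hg : G.Harmonic g) (hgl : G.OneLipschitz g)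
    {x : V} (hx : G.slack g x < q₀ / (4 * D)) :
    ∃ z, g x + q₀ / (4 * D) ≤ g z ∧ G.slack g z ≤ G.slack g x / (q₀ / (4 * D)) := by
  set β := q₀ / (4 * D) with hβ_def
  have hD0 : 0 < D := hq₀.trans_le hq₀D
  have hβ0 : 0 < β := by positivity
  have hβ : β ≤ 1 / 4 := by
    rw [div_le_iff₀ (by positivity)]
    linarith
  obtain ⟨y, hxy, hy⟩ := exists_sub_eq_one_sub_slack (hx.trans_le (hβ.trans (by norm_num)))
  set δ := G.slack g x
  have hδ0 : 0 ≤ δ := slack_nonneg hgl x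
  set U := (G.nbr x).filter fun z => β ≤ g z - g x
  have hmass : q₀ / 2 ≤ ∑ z ∈ U, G.q x z := by
    have h := q_mul_sub_sub_le_sum_q (hg x) hgl hxy hβ0.le (by linarith)
    have hqy : q₀ * (1 - δ) ≤ G.q x y * (1 - δ) :=
      mul_le_mul_of_nonneg_right (hq hxy) (by linarith)
    have hDβ : G.Deg x * β ≤ q₀ / 4 := calc
      G.Deg x * β ≤ D * β := mul_le_mul_of_nonneg_right (hD x) hβ0.le
      _ = q₀ / 4 := by rw [hβ_def]; field_simp
    rw [hy] at h
    nlinarith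
  have hcurv := sum_q_mul_slack_le (hκ y x hxy.ne.symm) hg hgl hxy hy (U := U)
    (Finset.filter_subset _ _) fun z hz => by linarith [(Finset.mem_filter.1 hz).2]
  have havg : ∑ z ∈ U, G.q x z * G.slack g z ≤ ∑ z ∈ U, G.q x z * (δ / β) := by
    rw [← Finset.sum_mul]
    calc _ ≤ (G.Deg x + G.Deg y) * δ := hcurv
      _ ≤ 2 * D * δ := by nlinarith [hD x, hD y]
      _ = q₀ / 2 * (δ / β) := by rw [hβ_def]; field_simp; ring
      _ ≤ _ := mul_le_mul_of_nonneg_right hmass (by positivity)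
  have hUne : U.Nonempty := Finset.nonempty_of_sum_ne_zero (f := G.q x) (by linarith)
  obtain ⟨z, hzU, hz⟩ := Finset.exists_le_of_sum_le hUne havg
  have hzx := Finset.mem_filter.1 hzU
  exact ⟨z, by linarith [hzx.2], le_of_mul_le_mul_left hz (G.q_pos (mem_nbr.1 hzx.1))⟩

end step

lemma exists_le_sub_of_forall_slack_lt (hDeg : BddAbove (Set.range G.Deg)) (hq : 0 < G.qMin)
    (hκ : ∀ x y : V, x ≠ y → 0 ≤ G.kappa x y) {g : V → ℝ} (hg : G.Harmonic g)
    (hgl : G.OneLipschitz g) (hslack : ∀ ε > 0, ∃ x, G.slack g x < ε) (M : ℝ) :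
    ∃ x x', M ≤ g x' - g x := by
  obtain ⟨D, hD⟩ := hDeg
  have hD' : ∀ v, G.Deg v ≤ D := fun v => hD ⟨v, rfl⟩
  obtain ⟨x₀, hx₀⟩ := hslack 1 one_pos
  obtain ⟨y₀, hxy₀, -⟩ := exists_sub_eq_one_sub_slack hx₀
  have hqD : G.qMin ≤ D := (qMin_le_q hxy₀).trans ((q_le_Deg hxy₀).trans (hD' x₀))
  have hD0 : 0 < D := hq.trans_le hqD
  set β := G.qMin / (4 * D)
  have hβ0 : 0 < β := by positivity
  have hβ1 : β ≤ 1 := by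
    rw [div_le_one (by positivity)]
    linarith
  obtain ⟨k, hk⟩ := exists_nat_ge (M / β)
  obtain ⟨x, hx⟩ := hslack (β ^ (k + 1)) (by positivity)
  obtain ⟨x', hx'⟩ := exists_add_nat_mul_le_of_step hβ0 hβ1
    (fun _ h => exists_add_le_and_slack_le hD' (fun _ _ => qMin_le_q) hq hqD hκ hg hgl h) k x hx
  refine ⟨x, x', ?_⟩
  rw [div_le_iff₀ hβ0] at hk
  linarith

end WeightedGraph

theorem liouville_of_nonneg_ollivier_curvature_general
    {V : Type*} (G : WeightedGraph V)
    (hconn : G.toSimpleGraph.Connected)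
    (hDeg : BddAbove (Set.range G.Deg))
    (hq : 0 < G.qMin)
    (hκ : ∀ x y : V, x ≠ y → 0 ≤ G.kappa x y)
    (f : V → ℝ) (hharm : G.Harmonic f)
    (hbdd : ∃ C : ℝ, ∀ x, |f x| ≤ C) :
    ∀ x y : V, f x = f y := by
  intro x y
  by_contra hxy
  obtain ⟨C, hC⟩ := hbdd
  obtain ⟨a, b, hab, hne⟩ := G.exists_adj_ne_of_ne hconn hxy
  have hf := G.bddAbove_edgeDiffs hC
  set L := G.gradNorm f
  have hL : 0 < L := G.gradNorm_pos hf hab hne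
  obtain ⟨u, v, huv⟩ := G.exists_le_sub_of_forall_slack_lt hDeg hq hκ (hharm.smul L⁻¹)
    (G.oneLipschitz_inv_gradNorm_smul hf hL) (fun _ => G.exists_slack_inv_gradNorm_smul_lt hL)
    (2 * C / L + 1)
  have hosc : (L⁻¹ • f) v - (L⁻¹ • f) u ≤ 2 * C / L := by
    simp only [Pi.smul_apply, smul_eq_mul, ← mul_sub]
    rw [inv_mul_eq_div]
    gcongr
    linarith [abs_le.1 (hC u), abs_le.1 (hC v)]
  linarith

/-- **Liouville property.** A connected, locally finite weighted
graph with `Deg_max < ∞`, `q_min > 0`, and nonnegative Ollivier curvature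
`κ(x,y) ≥ 0` for all `x ≠ y` has the Liouville property: every bounded
harmonic function is constant. -/
theorem liouville_of_nonneg_ollivier_curvature
    {V : Type*} [Countable V] (G : WeightedGraph V)
    (hconn : G.toSimpleGraph.Connected)
    (hDeg : BddAbove (Set.range G.Deg))
    (hq : 0 < G.qMin)
    (hκ : ∀ x y : V, x ≠ y → 0 ≤ G.kappa x y)
    (f : V → ℝ) (hharm : G.Harmonic f)
    (hbdd : ∃ C : ℝ, ∀ x, |f x| ≤ C) :
    ∀ x y : V, f x = f y :=
  liouville_of_nonneg_ollivier_curvature_general G hconn hDeg hq hκ f hharm hbdd
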